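/- arXiv:2202.09023 — 4 statements merged into one kernel-verified Lean document; each statement's English description precedes it below -/
import Mathlib

section
/- Euler Shift is consistent: for every mode x⋆ of f and every point x₀ in the basin of attraction of x⋆, there exists ρ₀ > 0 such that for every 0 < ρ ≤ ρ₀, the Euler Shift sequence with step size ρ started at x₀ converges to x⋆. -/
open Metric Set Filter MeasureTheory Topology
open scoped Topology RealInnerProductSpace

abbrev Euc (d : ℕ) := EuclideanSpace ℝ (Fin d)

/-- The Hessian of `f`, as the derivative of the gradient field. -/
noncomputable def hess {d : ℕ} (f : Euc d → ℝ) (x : Euc d) : Euc d →L[ℝ] Euc d :=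
  fderiv ℝ (gradient f) x

/-- The standing assumptions on the density `f`: nonnegative, integrable, vanishing at
infinity, twice differentiable with bounded and uniformly continuous zeroth, first and
second derivatives, and Morse (nonsingular Hessian at every critical point). -/
def IsNiceDensity {d : ℕ} (f : Euc d → ℝ) : Prop :=
  (∀ x, 0 ≤ f x) ∧
  Integrable f volume ∧
  Tendsto f (cocompact (Euc d)) (𝓝 0) ∧
  Differentiable ℝ f ∧
  Differentiable ℝ (gradient f) ∧
  (∃ M, ∀ x, |f x| ≤ M) ∧
  (∃ M, ∀ x, ‖gradient f x‖ ≤ M) ∧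
  (∃ M, ∀ x, ‖hess f x‖ ≤ M) ∧
  UniformContinuous f ∧
  UniformContinuous (gradient f) ∧
  UniformContinuous (hess f) ∧
  (∀ x, gradient f x = 0 → Function.Bijective (hess f x))

/-- `γ` is the gradient ascent curve of `f` starting at `x`, defined on `[0, ∞)`. -/
def IsGradFlow {d : ℕ} (f : Euc d → ℝ) (x : Euc d) (γ : ℝ → Euc d) : Prop :=
  γ 0 = x ∧ ∀ t ∈ Ici (0:ℝ), HasDerivWithinAt γ (gradient f (γ t)) (Ici 0) t

/-- The Euler Shift sequence with step size `ρ` started at `x₀`. -/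
def IsEulerShiftSeq {d : ℕ} (f : Euc d → ℝ) (ρ : ℝ) (x₀ : Euc d) (x : ℕ → Euc d) : Prop :=
  x 0 = x₀ ∧ ∀ k : ℕ, x (k+1) = x k + ρ • gradient f (x k)

/-!
At a nondegenerate mode `x⋆` the Hessian is symmetric, negative semidefinite and injective,
hence negative definite, so near `x⋆` the gradient field satisfies
`⟪∇f y, y - x⋆⟫ ≤ -a ‖y - x⋆‖²`. For small `ρ` an Euler step from such a `y` shrinks
`‖y - x⋆‖²` by the factor `1 - ρ a`. The gradient flow from `x₀` enters the ball `B(x⋆, δ/2)`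
by some time `T`, and by the discrete Grönwall inequality the Euler iterates stay within `O(ρ)`
of the flow up to time `T + 1`; so for small `ρ` some iterate lands in `B(x⋆, δ)`, after which
the contraction takes over.
-/

section Hessian

variable {E : Type*} [NormedAddCommGroup E] [InnerProductSpace ℝ E] [CompleteSpace E]
  {f : E → ℝ} {x : E}

theorem hasFDerivAt_innerSL_gradient (hf : DifferentiableAt ℝ f x) :
    HasFDerivAt f (innerSL ℝ (gradient f x)) x := by
  convert hf.hasFDerivAt
  ext v
  simp [gradient]

theorem IsLocalMax.gradient_eq_zero (h : IsLocalMax f x) : gradient f x = 0 := by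
  simp [gradient, h.fderiv_eq_zero]

theorem isSymmetric_fderiv_gradient (hf : Differentiable ℝ f)
    (hg : DifferentiableAt ℝ (gradient f) x) :
    (fderiv ℝ (gradient f) x : E →ₗ[ℝ] E).IsSymmetric := fun v w =>
  (second_derivative_symmetric (fun y => hasFDerivAt_innerSL_gradient (hf y))
    ((innerSL ℝ).hasFDerivAt.comp x hg.hasFDerivAt) v w).trans (real_inner_comm _ _)

theorem IsLocalMax.inner_fderiv_gradient_self_nonpos (h : IsLocalMax f x)
    (hf : Differentiable ℝ f) (hg : DifferentiableAt ℝ (gradient f) x) (v : E) :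
    ⟪fderiv ℝ (gradient f) x v, v⟫ ≤ 0 := by
  set g : ℝ → E := fun t => x + t • v
  set φ : ℝ → ℝ := f ∘ g
  have hg' : ∀ t, HasDerivAt g v t := fun t => by
    simpa [g] using ((hasDerivAt_id t).smul_const v).const_add x
  have hφ' : deriv φ = fun t => ⟪gradient f (g t), v⟫ := funext fun t =>
    ((hasFDerivAt_innerSL_gradient (hf _)).comp_hasDerivAt t (hg' t)).deriv
  have hφ'' : HasDerivAt (deriv φ) ⟪fderiv ℝ (gradient f) x v, v⟫ 0 := by
    have hg0 : HasFDerivAt (gradient f) (fderiv ℝ (gradient f) x) (g 0) := by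
      simpa [g] using hg.hasFDerivAt
    rw [hφ']
    exact ((innerSL ℝ).flip v).hasFDerivAt.comp_hasDerivAt 0 (hg0.comp_hasDerivAt 0 (hg' 0))
  -- if `φ'' 0 > 0` then `0` is also a local minimum of `φ`, so `φ` is locally constant near `0`
  by_contra! hpos
  have hmin : IsLocalMin φ 0 :=
    isLocalMin_of_deriv_deriv_pos (hφ''.deriv ▸ hpos) (by simp [hφ', g, h.gradient_eq_zero])
      (hf.continuous.comp (by fun_prop)).continuousAt
  have hmax : IsLocalMax φ 0 := IsLocalMax.comp_continuous (by simpa [g] using h) (by fun_prop)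
  have hconst : φ =ᶠ[𝓝 0] fun _ => φ 0 :=
    (hmin.and hmax).mono fun t ht => le_antisymm ht.2 ht.1
  have := hconst.deriv.deriv_eq
  simp [hφ''.deriv] at this
  linarith

end Hessian

theorem LinearMap.IsSymmetric.exists_inner_map_self_le_neg_mul_sq {E : Type*}
    [NormedAddCommGroup E] [InnerProductSpace ℝ E] [FiniteDimensional ℝ E] {T : E →ₗ[ℝ] E}
    (hT : T.IsSymmetric) (hnonpos : ∀ v, ⟪T v, v⟫ ≤ 0) (hinj : Function.Injective T) :
    ∃ a > 0, ∀ v, ⟪T v, v⟫ ≤ -a * ‖v‖ ^ 2 := by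
  rcases subsingleton_or_nontrivial E with hE | hE
  · exact ⟨1, one_pos, fun v => by simp [Subsingleton.elim v 0]⟩
  have : Nonempty {v : E // v ≠ 0} := let ⟨w, hw⟩ := exists_ne (0 : E); ⟨⟨w, hw⟩⟩
  -- `μ` is the largest eigenvalue of `T`
  set μ : ℝ := ⨆ v : {v : E // v ≠ 0}, ⟪T v, v⟫ / ‖(v : E)‖ ^ 2
  have hquot : ∀ v : {v : E // v ≠ 0}, ⟪T v, v⟫ / ‖(v : E)‖ ^ 2 ≤ 0 := fun v =>
    div_nonpos_of_nonpos_of_nonneg (hnonpos v) (by positivity)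
  have hrayleigh : ∀ v : {v : E // v ≠ 0}, ⟪T v, v⟫ / ‖(v : E)‖ ^ 2 ≤ μ :=
    le_ciSup ⟨0, by rintro _ ⟨v, rfl⟩; exact hquot v⟩
  have hμ_nonpos : μ ≤ 0 := ciSup_le hquot
  have hμ_ne : μ ≠ 0 := by
    rintro hμ
    obtain ⟨v, hv⟩ := (hT.hasEigenvalue_iSup_of_finiteDimensional).exists_hasEigenvector
    have hTv : T v = μ • v := hv.apply_eq_smul
    exact hv.2 (hinj (by rw [hTv, hμ, zero_smul, map_zero]))
  refine ⟨-μ, by linarith [lt_of_le_of_ne hμ_nonpos hμ_ne], fun v => ?_⟩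
  rcases eq_or_ne v 0 with rfl | hv
  · simp
  have := hrayleigh ⟨v, hv⟩
  rw [div_le_iff₀ (by positivity)] at this
  linarith

section Contraction

variable {E : Type*} [NormedAddCommGroup E] [InnerProductSpace ℝ E]

theorem eventually_inner_le_neg_mul_sq_of_hasFDerivAt {g : E → E} {H : E →L[ℝ] E} {x : E}
    (hH : HasFDerivAt g H x) (hx : g x = 0) {a b : ℝ} (hb : b < a)
    (hcoer : ∀ v, ⟪H v, v⟫ ≤ -a * ‖v‖ ^ 2) :
    ∀ᶠ y in 𝓝 x, ⟪g y, y - x⟫ ≤ -b * ‖y - x‖ ^ 2 := by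
  filter_upwards [hH.isLittleO.def (sub_pos.2 hb)] with y hy
  rw [hx, sub_zero] at hy
  have hrem : ⟪g y - H (y - x), y - x⟫ ≤ (a - b) * ‖y - x‖ ^ 2 := by
    calc _ ≤ ‖g y - H (y - x)‖ * ‖y - x‖ := real_inner_le_norm _ _
      _ ≤ (a - b) * ‖y - x‖ * ‖y - x‖ := by gcongr
      _ = (a - b) * ‖y - x‖ ^ 2 := by ring
  have := hcoer (y - x)
  rw [inner_sub_left] at hrem
  linarith

theorem norm_add_smul_sq_le {v w : E} {a L ρ : ℝ} (hvw : ⟪w, v⟫ ≤ -a * ‖v‖ ^ 2)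
    (hw : ‖w‖ ≤ L * ‖v‖) (hρ : 0 ≤ ρ) (hρL : ρ * L ^ 2 ≤ a) :
    ‖v + ρ • w‖ ^ 2 ≤ (1 - ρ * a) * ‖v‖ ^ 2 := by
  have hw2 : ‖w‖ ^ 2 ≤ L ^ 2 * ‖v‖ ^ 2 := by
    rw [← mul_pow]; exact pow_le_pow_left₀ (norm_nonneg w) hw 2
  rw [norm_add_sq_real, norm_smul, real_inner_smul_right, real_inner_comm, mul_pow,
    Real.norm_eq_abs, sq_abs]
  nlinarith [mul_le_mul_of_nonneg_left hw2 (sq_nonneg ρ), mul_le_mul_of_nonneg_left hvw hρ,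
    mul_le_mul_of_nonneg_right hρL (mul_nonneg hρ (sq_nonneg ‖v‖))]

end Contraction

theorem tendsto_of_dist_sq_le_mul {X : Type*} [PseudoMetricSpace X] {x : ℕ → X} {y : X}
    {δ q : ℝ} (hq₀ : 0 ≤ q) (hq₁ : q < 1) (h₀ : dist (x 0) y < δ)
    (hstep : ∀ k, dist (x k) y < δ → dist (x (k + 1)) y ^ 2 ≤ q * dist (x k) y ^ 2) :
    Tendsto x atTop (𝓝 y) := by
  have hbound : ∀ n, dist (x n) y < δ ∧ dist (x n) y ^ 2 ≤ q ^ n * dist (x 0) y ^ 2 := by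
    intro n
    induction n with
    | zero => simpa using h₀
    | succ n ih =>
      have h := hstep n ih.1
      refine ⟨?_, ?_⟩
      · refine lt_of_le_of_lt ?_ ih.1
        exact pow_le_pow_iff_left₀ dist_nonneg dist_nonneg two_ne_zero |>.1
          (h.trans (mul_le_of_le_one_left (sq_nonneg _) hq₁.le))
      · calc _ ≤ q * dist (x n) y ^ 2 := h
          _ ≤ q * (q ^ n * dist (x 0) y ^ 2) := by gcongr; exact ih.2
          _ = q ^ (n + 1) * dist (x 0) y ^ 2 := by ring
  have hsq : Tendsto (fun n => dist (x n) y ^ 2) atTop (𝓝 0) :=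
    squeeze_zero (fun n => sq_nonneg _) (fun n => (hbound n).2)
      (by simpa using (tendsto_pow_atTop_nhds_zero_of_lt_one hq₀ hq₁).mul_const (dist (x 0) y ^ 2))
  rw [tendsto_iff_dist_tendsto_zero]
  simpa using hsq.sqrt

section EulerShift

variable {d : ℕ} {f : Euc d → ℝ} {x₀ : Euc d} {γ : ℝ → Euc d} {M : ℝ} {L : NNReal}

theorem IsGradFlow.norm_sub_le (hγ : IsGradFlow f x₀ γ) (hM : ∀ y, ‖gradient f y‖ ≤ M)
    {s t : ℝ} (hs : 0 ≤ s) (hst : s ≤ t) : ‖γ t - γ s‖ ≤ M * (t - s) := by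
  simpa [abs_of_nonneg (sub_nonneg.2 hst)] using
    (convex_Ici 0).norm_image_sub_le_of_norm_hasDerivWithin_le hγ.2 (fun u _ => hM (γ u))
      hs (hs.trans hst)

theorem IsGradFlow.norm_sub_sub_smul_le (hγ : IsGradFlow f x₀ γ)
    (hM : ∀ y, ‖gradient f y‖ ≤ M) (hL : LipschitzWith L (gradient f)) {t ρ : ℝ} (ht : 0 ≤ t)
    (hρ : 0 ≤ ρ) : ‖γ (t + ρ) - γ t - ρ • gradient f (γ t)‖ ≤ L * M * ρ ^ 2 := by
  set w := gradient f (γ t)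
  have hsub : Icc t (t + ρ) ⊆ Ici 0 := fun s hs => ht.trans hs.1
  have hderiv : ∀ s ∈ Icc t (t + ρ), HasDerivWithinAt (fun s => γ s - s • w)
      (gradient f (γ s) - w) (Icc t (t + ρ)) s := fun s hs =>
    ((hγ.2 s (hsub hs)).mono hsub).sub (by simpa using (hasDerivWithinAt_id s _).smul_const w)
  have hbound : ∀ s ∈ Icc t (t + ρ), ‖gradient f (γ s) - w‖ ≤ L * M * ρ := fun s hs =>
    calc _ ≤ L * ‖γ s - γ t‖ := hL.norm_sub_le _ _
      _ ≤ L * (M * ρ) := by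
        gcongr
        exact (hγ.norm_sub_le hM ht hs.1).trans (by nlinarith [hs.2, (norm_nonneg _).trans (hM 0)])
      _ = L * M * ρ := by ring
  have := (convex_Icc t (t + ρ)).norm_image_sub_le_of_norm_hasDerivWithin_le hderiv hbound
    (left_mem_Icc.2 (by linarith)) (right_mem_Icc.2 (by linarith))
  convert this using 1
  · congr 1; rw [add_smul]; abel
  · rw [add_sub_cancel_left, Real.norm_of_nonneg hρ]; ring

theorem IsEulerShiftSeq.norm_sub_gradFlow_le {ρ : ℝ} {x : ℕ → Euc d}
    (hx : IsEulerShiftSeq f ρ x₀ x) (hγ : IsGradFlow f x₀ γ) (hM : ∀ y, ‖gradient f y‖ ≤ M)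
    (hL : LipschitzWith L (gradient f)) (hρ : 0 ≤ ρ) (k : ℕ) :
    ‖x k - γ (k * ρ)‖ ≤ k * (L * M * ρ ^ 2) * Real.exp (k * (ρ * L)) := by
  have hM₀ : 0 ≤ M := (norm_nonneg _).trans (hM 0)
  have hstep : ∀ n ≥ 0, ‖x (n + 1) - γ ((n + 1 : ℕ) * ρ)‖
      ≤ (1 + ρ * L) * ‖x n - γ (n * ρ)‖ + L * M * ρ ^ 2 := fun n _ => by
    have htrunc := hγ.norm_sub_sub_smul_le hM hL (by positivity : (0 : ℝ) ≤ n * ρ) hρ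
    have hlip := hL.norm_sub_le (x n) (γ (n * ρ))
    have hsplit : x (n + 1) - γ ((n + 1 : ℕ) * ρ) = (x n - γ (n * ρ))
        + ρ • (gradient f (x n) - gradient f (γ (n * ρ)))
        - (γ (n * ρ + ρ) - γ (n * ρ) - ρ • gradient f (γ (n * ρ))) := by
      rw [hx.2 n, Nat.cast_succ, add_one_mul, smul_sub]; abel
    rw [hsplit]
    refine (norm_sub_le _ _).trans ?_
    grw [norm_add_le, norm_smul, Real.norm_of_nonneg hρ, hlip, htrunc]
    linarith
  have := discrete_gronwall (u := fun n => ‖x n - γ (n * ρ)‖) (n₀ := 0)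
    (norm_nonneg _) hstep (fun _ _ => by positivity)
    (fun _ _ => by positivity) (Nat.zero_le k)
  simpa [hx.1, hγ.1] using this

theorem IsGradFlow.eventually_exists_eulerShift_near (hγ : IsGradFlow f x₀ γ)
    (hM : ∀ y, ‖gradient f y‖ ≤ M) (hL : LipschitzWith L (gradient f)) {T ε : ℝ} (hT : 0 ≤ T)
    (hε : 0 < ε) : ∀ᶠ ρ in 𝓝[>] 0, ∀ x, IsEulerShiftSeq f ρ x₀ x →
      ∃ K : ℕ, T ≤ K * ρ ∧ ‖x K - γ (K * ρ)‖ < ε := by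
  have hM₀ : 0 ≤ M := (norm_nonneg _).trans (hM 0)
  set C := (T + 1) * (L * M) * Real.exp ((T + 1) * L)
  have hsmall : ∀ᶠ ρ in 𝓝 (0 : ℝ), ρ < 1 ∧ C * ρ < ε :=
    (gt_mem_nhds one_pos).and <| ((continuous_const_mul C).tendsto' 0 0 (mul_zero C)).eventually
      (gt_mem_nhds hε)
  filter_upwards [nhdsWithin_le_nhds hsmall, self_mem_nhdsWithin] with ρ ⟨hρ₁, hCρ⟩ hρ x hx
  have hρ : 0 < ρ := hρ
  set K := ⌈T / ρ⌉₊
  have hTK : T ≤ K * ρ := (div_le_iff₀ hρ).1 (Nat.le_ceil _)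
  have hKT : K * ρ ≤ T + 1 := by
    have := (lt_div_iff₀ hρ).1 (sub_lt_iff_lt_add.2 (Nat.ceil_lt_add_one (div_nonneg hT hρ.le)))
    nlinarith
  refine ⟨K, hTK, (hx.norm_sub_gradFlow_le hγ hM hL hρ.le K).trans_lt (lt_of_le_of_lt ?_ hCρ)⟩
  calc (K : ℝ) * (L * M * ρ ^ 2) * Real.exp (K * (ρ * L))
      = (K * ρ) * (L * M) * Real.exp ((K * ρ) * L) * ρ := by ring_nf
    _ ≤ C * ρ := by simp only [C]; gcongr

end EulerShift

theorem eventually_tendsto_euler_of_inner_le_neg_mul_sq {E : Type*} [NormedAddCommGroup E]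
    [InnerProductSpace ℝ E] {g : E → E} {y : E} {a δ : ℝ} {L : NNReal} (ha : 0 < a)
    (hL : LipschitzWith L g) (hy : g y = 0)
    (hcoer : ∀ z ∈ ball y δ, ⟪g z, z - y⟫ ≤ -a * ‖z - y‖ ^ 2) :
    ∀ᶠ ρ in 𝓝[>] (0 : ℝ), ∀ x : ℕ → E, (∀ k, x (k + 1) = x k + ρ • g (x k)) →
      x 0 ∈ ball y δ → Tendsto x atTop (𝓝 y) := by
  have hsmall : ∀ᶠ ρ in 𝓝 (0 : ℝ), ρ * L ^ 2 < a ∧ ρ * a < 1 :=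
    (((continuous_mul_const _).tendsto' 0 0 (zero_mul _)).eventually (gt_mem_nhds ha)).and
      (((continuous_mul_const _).tendsto' 0 0 (zero_mul _)).eventually (gt_mem_nhds one_pos))
  filter_upwards [nhdsWithin_le_nhds hsmall, self_mem_nhdsWithin] with ρ ⟨hρL, hρa⟩ hρ x hx h₀
  have hρ : 0 < ρ := hρ
  refine tendsto_of_dist_sq_le_mul (q := 1 - ρ * a) (by linarith) (by nlinarith) h₀ fun k hk => ?_
  have hgk : ‖g (x k)‖ ≤ L * ‖x k - y‖ := by simpa [hy] using hL.norm_sub_le (x k) y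
  rw [dist_eq_norm, dist_eq_norm, hx k, add_sub_right_comm]
  exact norm_add_smul_sq_le (hcoer _ hk) hgk hρ.le hρL.le

theorem eulerShift_consistent_general
    {d : ℕ} (f : Euc d → ℝ) (hf : IsNiceDensity f)
    (xstar : Euc d) (hmode : IsLocalMax f xstar)
    (x₀ : Euc d) (γ : ℝ → Euc d) (hγ : IsGradFlow f x₀ γ)
    (hbasin : Tendsto γ atTop (𝓝 xstar)) :
    ∃ ρ₀ > (0:ℝ), ∀ ρ, 0 < ρ → ρ ≤ ρ₀ →
      ∀ x : ℕ → Euc d, IsEulerShiftSeq f ρ x₀ x →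
        Tendsto x atTop (𝓝 xstar) := by
  obtain ⟨-, -, -, hdiff, hdg, -, ⟨M, hM⟩, ⟨M₂, hM₂⟩, -, -, -, hmorse⟩ := hf
  have hL : LipschitzWith M₂.toNNReal (gradient f) :=
    lipschitzWith_of_nnnorm_fderiv_le hdg fun y => by
      rw [← NNReal.coe_le_coe, coe_nnnorm]; exact (hM₂ y).trans (Real.le_coe_toNNReal M₂)
  have hcrit := hmode.gradient_eq_zero
  obtain ⟨a, ha, hhess⟩ := LinearMap.IsSymmetric.exists_inner_map_self_le_neg_mul_sq
    (T := (hess f xstar : Euc d →ₗ[ℝ] Euc d)) (isSymmetric_fderiv_gradient hdiff (hdg xstar))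
    (hmode.inner_fderiv_gradient_self_nonpos hdiff (hdg xstar)) (hmorse xstar hcrit).injective
  obtain ⟨δ, hδ, hcoer⟩ := Metric.eventually_nhds_iff_ball.1 <|
    eventually_inner_le_neg_mul_sq_of_hasFDerivAt (hdg xstar).hasFDerivAt hcrit
      (half_lt_self ha) hhess
  obtain ⟨T, hT⟩ := Metric.tendsto_atTop.1 hbasin (δ / 2) (half_pos hδ)
  obtain ⟨ρ₀, hρ₀, hsmall⟩ := mem_nhdsGT_iff_exists_Ioc_subset.1 <|
    (hγ.eventually_exists_eulerShift_near hM hL (le_max_left 0 T) (half_pos hδ)).and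
      (eventually_tendsto_euler_of_inner_le_neg_mul_sq (half_pos ha) hL hcrit hcoer)
  refine ⟨ρ₀, hρ₀, fun ρ hρ hρρ₀ x hx => ?_⟩
  obtain ⟨hnear, hlocal⟩ := hsmall ⟨hρ, hρρ₀⟩
  obtain ⟨K, hTK, hK⟩ := hnear x hx
  refine (tendsto_add_atTop_iff_nat K).1 <|
    hlocal (fun n => x (n + K)) (fun n => by rw [add_right_comm]; exact hx.2 _) ?_
  calc dist (x (0 + K)) xstar ≤ dist (x K) (γ (K * ρ)) + dist (γ (K * ρ)) xstar := by
        rw [zero_add]; exact dist_triangle _ _ _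
    _ < δ / 2 + δ / 2 := by
        rw [dist_eq_norm]; exact add_lt_add hK (hT _ ((le_max_right 0 T).trans hTK))
    _ = δ := add_halves δ

/-- Euler Shift is consistent: started at any point of the basin of
attraction of a mode `x⋆`, for `ρ` small enough the Euler Shift sequence converges to `x⋆`. -/
theorem eulerShift_consistent
    {d : ℕ} (hd : 0 < d) (f : Euc d → ℝ) (hf : IsNiceDensity f)
    (xstar : Euc d) (hmode : IsLocalMax f xstar)
    (x₀ : Euc d) (γ : ℝ → Euc d) (hγ : IsGradFlow f x₀ γ)
    (hbasin : Tendsto γ atTop (𝓝 xstar)) :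
    ∃ ρ₀ > (0:ℝ), ∀ ρ, 0 < ρ → ρ ≤ ρ₀ →
      ∀ x : ℕ → Euc d, IsEulerShiftSeq f ρ x₀ x →
        Tendsto x atTop (𝓝 xstar) :=
  eulerShift_consistent_general f hf xstar hmode x₀ γ hγ hbasin
end

section
/- Let k : [0,∞) → [0,∞) be continuous, nonincreasing and integrable, set K(x) = k(‖x‖²) for x ∈ ℝ^d, fix c > 0, define l(u) = c·∫_u^∞ k(v) dv and L(x) = l(‖x‖²), and for h > 0 set K_h(x) = h^{−d}K(x/h) and L_h(x) = h^{−d}L(x/h). Then for every x at which (K_h ∗ f)(x) > 0, the mean shift MS_h(x) := (∫ K_h(y − x)(y − x) f(y) dy)/(∫ K_h(y − x) f(y) dy) satisfies MS_h(x) = (h²/(2c)) · ∇(L_h ∗ f)(x) / (K_h ∗ f)(x), where ∗ denotes convolution on ℝ^d. -/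
open Metric Set Filter MeasureTheory Topology
open scoped Topology RealInnerProductSpace

/-- The rescaled radial kernel `x ↦ h^{-d} k(‖x/h‖²)` built from a profile `k : ℝ → ℝ`. -/
noncomputable def radialKernel {d : ℕ} (k : ℝ → ℝ) (h : ℝ) (x : Euc d) : ℝ :=
  (h ^ d)⁻¹ * k (‖h⁻¹ • x‖ ^ 2)

/-- The shadow profile `l(u) = c ∫_u^∞ k(v) dv`. -/
noncomputable def shadowProfile (k : ℝ → ℝ) (c : ℝ) (u : ℝ) : ℝ :=
  c * ∫ v in Ioi u, k v

/-!
Since `l' = -c k`, the chain rule gives `∇_z L_h(z - y) = -(2c/h²) K_h(z - y) (z - y)`.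
A monotone integrable profile satisfies `u k(u) ≤ 2 ∫₀^∞ k`, so `‖K_h(w) w‖` is bounded and
`|f|` dominates these gradients; differentiating under the integral sign gives
`∇(L_h ∗ f)(x) = (2c/h²) ∫ K_h(y - x) (y - x) f(y) dy`, and the identity is this equation
divided by `(K_h ∗ f)(x)`.
-/

theorem hasGradientAt_integral_of_dominated_of_gradient_le
    {E α : Type*} [NormedAddCommGroup E] [InnerProductSpace ℝ E] [CompleteSpace E]
    [MeasurableSpace α] {μ : Measure α} {F : E → α → ℝ} {F' : E → α → E} {x₀ : E}
    {s : Set E} {bound : α → ℝ} (hs : s ∈ 𝓝 x₀)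
    (hF_meas : ∀ᶠ x in 𝓝 x₀, AEStronglyMeasurable (F x) μ) (hF_int : Integrable (F x₀) μ)
    (hF'_meas : AEStronglyMeasurable (F' x₀) μ)
    (h_bound : ∀ᵐ a ∂μ, ∀ x ∈ s, ‖F' x a‖ ≤ bound a) (bound_integrable : Integrable bound μ)
    (h_diff : ∀ᵐ a ∂μ, ∀ x ∈ s, HasGradientAt (F · a) (F' x a) x) :
    HasGradientAt (fun x ↦ ∫ a, F x a ∂μ) (∫ a, F' x₀ a ∂μ) x₀ := by
  let J := (InnerProductSpace.toDual ℝ E).toContinuousLinearEquiv.toContinuousLinearMap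
  have hF'_int : Integrable (F' x₀) μ :=
    bound_integrable.mono' hF'_meas <| h_bound.mono fun a ha ↦ ha x₀ (mem_of_mem_nhds hs)
  have key := hasFDerivAt_integral_of_dominated_of_fderiv_le (F' := fun x a ↦ J (F' x a)) hs
    hF_meas hF_int (J.continuous.comp_aestronglyMeasurable hF'_meas)
    (h_bound.mono fun a ha x hx ↦ by simpa [J] using ha x hx) bound_integrable
    (h_diff.mono fun a ha x hx ↦ (ha x hx).hasFDerivAt)
  rw [J.integral_comp_commSL (by simp) hF'_int] at key
  simpa [J] using key.hasGradientAt

theorem mul_le_two_mul_integral_of_antitoneOn {k : ℝ → ℝ} (hk0 : ∀ u ∈ Ici (0:ℝ), 0 ≤ k u)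
    (hkm : AntitoneOn k (Ici 0)) (hki : IntegrableOn k (Ici 0)) {s : ℝ} (hs : 0 ≤ s) :
    s * k s ≤ 2 * ∫ v in Ici 0, k v := by
  have hsub : Ioc (s / 2) s ⊆ Ici 0 := fun v hv ↦ (by linarith : (0:ℝ) ≤ s / 2).trans hv.1.le
  have h_half : s / 2 * k s ≤ ∫ v in Ioc (s / 2) s, k v := by
    calc s / 2 * k s = ∫ _ in Ioc (s / 2) s, k s := by
          rw [setIntegral_const, Real.volume_real_Ioc_of_le (by linarith), smul_eq_mul]; ring
      _ ≤ ∫ v in Ioc (s / 2) s, k v :=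
          setIntegral_mono_on (integrableOn_const measure_Ioc_lt_top.ne) (hki.mono_set hsub)
            measurableSet_Ioc fun v hv ↦ hkm (hsub hv) hs hv.2
  have h_sub : ∫ v in Ioc (s / 2) s, k v ≤ ∫ v in Ici 0, k v :=
    setIntegral_mono_set hki ((ae_restrict_iff' measurableSet_Ici).2 (.of_forall hk0))
      hsub.eventuallyLE
  linarith

theorem mul_apply_sq_le_of_antitoneOn {k : ℝ → ℝ} (hk0 : ∀ u ∈ Ici (0:ℝ), 0 ≤ k u)
    (hkm : AntitoneOn k (Ici 0)) (hki : IntegrableOn k (Ici 0)) {t : ℝ} (ht : 0 ≤ t) :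
    t * k (t ^ 2) ≤ k 0 + 2 * ∫ v in Ici 0, k v := by
  have hkt : 0 ≤ k (t ^ 2) := hk0 _ (sq_nonneg t)
  have hI : 0 ≤ ∫ v in Ici 0, k v := setIntegral_nonneg measurableSet_Ici hk0
  rcases le_or_gt t 1 with ht1 | ht1
  · have : k (t ^ 2) ≤ k 0 := hkm self_mem_Ici (sq_nonneg t) (sq_nonneg t)
    nlinarith
  · have := mul_le_two_mul_integral_of_antitoneOn hk0 hkm hki (sq_nonneg t)
    nlinarith [hk0 0 self_mem_Ici]

theorem abs_shadowProfile_le {k : ℝ → ℝ} (hki : IntegrableOn k (Ici 0)) (c : ℝ) {u : ℝ}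
    (hu : 0 ≤ u) : |shadowProfile k c u| ≤ |c| * ∫ v in Ici 0, |k v| := by
  rw [shadowProfile, abs_mul]
  gcongr
  calc |∫ v in Ioi u, k v| ≤ ∫ v in Ioi u, |k v| := abs_integral_le_integral_abs
    _ ≤ ∫ v in Ici 0, |k v| :=
      setIntegral_mono_set hki.abs (.of_forall fun _ ↦ abs_nonneg _)
        (show Ioi u ⊆ Ici 0 from fun _ hv ↦ hu.trans (le_of_lt hv)).eventuallyLE

/- `shadowProfile k c u` for `u < 0` involves `k` off `[0, ∞)`, where nothing is assumed; an
extension through `0` is needed because `z ↦ ‖z - y‖²` attains `0`. -/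
theorem exists_hasDerivAt_eqOn_shadowProfile {k : ℝ → ℝ} (hkc : ContinuousOn k (Ici 0))
    (hki : IntegrableOn k (Ici 0)) (c : ℝ) :
    ∃ l : ℝ → ℝ, EqOn l (shadowProfile k c) (Ici 0) ∧
      ∀ u, HasDerivAt l (-(c * k (max u 0))) u := by
  set k' : ℝ → ℝ := fun u ↦ k (max u 0)
  have hk'c : Continuous k' :=
    hkc.comp_continuous (continuous_id.max continuous_const) fun u ↦ le_max_right u 0
  refine ⟨fun u ↦ shadowProfile k c 0 - c * ∫ t in (0:ℝ)..u, k' t, fun u (hu : 0 ≤ u) ↦ ?_,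
    fun u ↦ ?_⟩
  · have hsplit : ∫ v in Ioi 0, k v = (∫ v in Ioc 0 u, k v) + ∫ v in Ioi u, k v := by
      rw [← setIntegral_union (Ioc_disjoint_Ioi le_rfl) measurableSet_Ioi
        (hki.mono_set (Ioc_subset_Ioi_self.trans Ioi_subset_Ici_self))
        (hki.mono_set fun v hv ↦ hu.trans (le_of_lt hv)), Ioc_union_Ioi_eq_Ioi hu]
    have hk' : ∫ t in (0:ℝ)..u, k' t = ∫ v in Ioc 0 u, k v := by
      rw [intervalIntegral.integral_of_le hu]
      exact setIntegral_congr_fun measurableSet_Ioc fun v hv ↦ by simp [k', hv.1.le]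
    simp only [shadowProfile, hk', hsplit]
    ring
  · exact ((intervalIntegral.integral_hasDerivAt_right (hk'c.intervalIntegrable 0 u)
      (hk'c.stronglyMeasurableAtFilter _ _) hk'c.continuousAt).const_mul c).const_sub _

section RadialKernel

variable {d : ℕ} {k : ℝ → ℝ} {h : ℝ}

theorem radialKernel_neg (w : Euc d) : radialKernel k h (-w) = radialKernel k h w := by
  rw [radialKernel, radialKernel, smul_neg, norm_neg]

theorem continuous_radialKernel (hkc : ContinuousOn k (Ici 0)) :
    Continuous (radialKernel (d := d) k h) :=
  continuous_const.mul <| hkc.comp_continuous ((continuous_const_smul h⁻¹).norm.pow 2)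
    fun w ↦ sq_nonneg ‖h⁻¹ • w‖

theorem norm_radialKernel_smul_le (hk0 : ∀ u ∈ Ici (0:ℝ), 0 ≤ k u)
    (hkm : AntitoneOn k (Ici 0)) (hki : IntegrableOn k (Ici 0)) (hh : 0 < h) (w : Euc d) :
    ‖radialKernel k h w • w‖ ≤ (h ^ d)⁻¹ * h * (k 0 + 2 * ∫ v in Ici 0, k v) := by
  have hw : ‖w‖ = h * ‖h⁻¹ • w‖ := by
    rw [norm_smul, Real.norm_of_nonneg (inv_nonneg.2 hh.le), mul_inv_cancel_left₀ hh.ne']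
  have hK : 0 ≤ radialKernel k h w :=
    mul_nonneg (by positivity) (hk0 _ (sq_nonneg ‖h⁻¹ • w‖))
  calc ‖radialKernel k h w • w‖
      = (h ^ d)⁻¹ * h * (‖h⁻¹ • w‖ * k (‖h⁻¹ • w‖ ^ 2)) := by
        rw [norm_smul, Real.norm_of_nonneg hK, hw, radialKernel]; ring
    _ ≤ (h ^ d)⁻¹ * h * (k 0 + 2 * ∫ v in Ici 0, k v) := by
        gcongr
        exact mul_apply_sq_le_of_antitoneOn hk0 hkm hki (norm_nonneg _)

theorem abs_radialKernel_shadowProfile_le (hki : IntegrableOn k (Ici 0)) (c : ℝ) (w : Euc d) :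
    |radialKernel (shadowProfile k c) h w| ≤ |(h ^ d)⁻¹| * (|c| * ∫ v in Ici 0, |k v|) := by
  rw [radialKernel, abs_mul]
  gcongr
  exact abs_shadowProfile_le hki c (sq_nonneg _)

theorem hasGradientAt_radialKernel_shadowProfile (hkc : ContinuousOn k (Ici 0))
    (hki : IntegrableOn k (Ici 0)) (c : ℝ) (w : Euc d) :
    HasGradientAt (radialKernel (shadowProfile k c) h)
      ((-(2 * c) / h ^ 2 * radialKernel k h w) • w) w := by
  obtain ⟨l, hl, hl'⟩ := exists_hasDerivAt_eqOn_shadowProfile hkc hki c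
  have hL : radialKernel (shadowProfile k c) h = fun w : Euc d ↦ (h ^ d)⁻¹ * l (‖h⁻¹ • w‖ ^ 2) :=
    funext fun w ↦ by rw [radialKernel, hl (sq_nonneg ‖h⁻¹ • w‖)]
  rw [hL, hasGradientAt_iff_hasFDerivAt]
  refine (((hl' _).comp_hasFDerivAt w ((hasFDerivAt_id w).const_smul h⁻¹).norm_sq).const_mul
    _).congr_fderiv ?_
  ext v
  simp only [Pi.smul_apply, id_eq, norm_nonneg, pow_succ_nonneg, sup_of_le_left, map_smul,
    ContinuousLinearMap.comp_smulₛₗ, map_inv₀, Real.ringHom_apply, ContinuousLinearMap.comp_id,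
    neg_smul, smul_neg, neg_apply, smul_apply, coe_innerSL_apply, smul_eq_mul, nsmul_eq_mul,
    Nat.cast_ofNat, radialKernel, InnerProductSpace.toDual_apply_apply]
  ring

theorem hasGradientAt_radialKernel_shadowProfile_sub_mul (hkc : ContinuousOn k (Ici 0))
    (hki : IntegrableOn k (Ici 0)) (c a : ℝ) (y z : Euc d) :
    HasGradientAt (fun w ↦ radialKernel (shadowProfile k c) h (w - y) * a)
      ((a * (-(2 * c) / h ^ 2 * radialKernel k h (z - y))) • (z - y)) z := by
  have hL := (hasGradientAt_radialKernel_shadowProfile (h := h) hkc hki c (z - y)).hasFDerivAt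
  rw [hasGradientAt_iff_hasFDerivAt]
  refine ((hL.comp z ((hasFDerivAt_id z).sub_const y)).mul_const a).congr_fderiv ?_
  ext v
  simp only [smul_apply, ContinuousLinearMap.comp_apply,
    InnerProductSpace.toDual_apply_apply, real_inner_smul_left, smul_eq_mul,
    ContinuousLinearMap.id_apply]
  ring

theorem hasGradientAt_radialKernel_shadowProfile_conv {f : Euc d → ℝ} (hfi : Integrable f)
    (hk0 : ∀ u ∈ Ici (0:ℝ), 0 ≤ k u) (hkc : ContinuousOn k (Ici 0))
    (hkm : AntitoneOn k (Ici 0)) (hki : IntegrableOn k (Ici 0)) (c : ℝ) (hh : 0 < h)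
    (x : Euc d) :
    HasGradientAt (fun z ↦ ∫ y, radialKernel (shadowProfile k c) h (z - y) * f y)
      ((2 * c / h ^ 2) • ∫ y, (radialKernel k h (y - x) * f y) • (y - x)) x := by
  set C := (h ^ d)⁻¹ * h * (k 0 + 2 * ∫ v in Ici 0, k v)
  have hLc : Continuous (radialKernel (d := d) (shadowProfile k c) h) :=
    continuous_iff_continuousAt.2 fun w ↦
      (hasGradientAt_radialKernel_shadowProfile hkc hki c w).differentiableAt.continuousAt
  have hKc : Continuous (radialKernel (d := d) k h) := continuous_radialKernel hkc
  have hsub : ∀ z : Euc d, Continuous fun y ↦ z - y := fun z ↦ continuous_const.sub continuous_id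
  have key := hasGradientAt_integral_of_dominated_of_gradient_le
    (F := fun z y ↦ radialKernel (shadowProfile k c) h (z - y) * f y)
    (F' := fun z y ↦ (f y * (-(2 * c) / h ^ 2 * radialKernel k h (z - y))) • (z - y))
    (bound := fun y ↦ ‖f y‖ * (‖2 * c / h ^ 2‖ * C)) univ_mem
    (.of_forall fun z ↦ (hLc.comp (hsub z)).aestronglyMeasurable.mul hfi.aestronglyMeasurable)
    (hfi.bdd_mul (hLc.comp (hsub x)).aestronglyMeasurable
      (.of_forall fun y ↦ abs_radialKernel_shadowProfile_le hki c (x - y)))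
    ((hfi.aestronglyMeasurable.mul ((hKc.comp (hsub x)).const_mul _).aestronglyMeasurable).smul
      (hsub x).aestronglyMeasurable)
    (.of_forall fun y z _ ↦ ?_) (hfi.norm.mul_const _)
    (.of_forall fun y z _ ↦ hasGradientAt_radialKernel_shadowProfile_sub_mul hkc hki c (f y) y z)
  · convert key using 1
    rw [← integral_smul]
    refine integral_congr_ae (.of_forall fun y ↦ ?_)
    simp only [smul_smul, ← neg_sub y x, smul_neg, ← neg_smul, radialKernel_neg]
    congr 1
    ring
  · calc ‖(f y * (-(2 * c) / h ^ 2 * radialKernel k h (z - y))) • (z - y)‖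
        = ‖f y‖ * (‖2 * c / h ^ 2‖ * ‖radialKernel k h (z - y) • (z - y)‖) := by
          rw [← smul_smul, ← smul_smul, norm_smul, norm_smul, neg_div, norm_neg]
      _ ≤ ‖f y‖ * (‖2 * c / h ^ 2‖ * C) := by
          gcongr
          exact norm_radialKernel_smul_le hk0 hkm hki hh _

end RadialKernel

theorem mean_shift_eq_shadow_gradient_general
    {d : ℕ} (f : Euc d → ℝ)
    (hfi : Integrable f volume)
    (k : ℝ → ℝ) (hk0 : ∀ u ∈ Ici (0:ℝ), 0 ≤ k u)
    (hkc : ContinuousOn k (Ici 0)) (hkm : AntitoneOn k (Ici 0))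
    (hki : IntegrableOn k (Ici 0) volume)
    (c : ℝ) (hc : 0 < c) (h : ℝ) (hh : 0 < h)
    (x : Euc d) :
    (∫ y, radialKernel k h (y - x) * f y)⁻¹ •
        (∫ y, (radialKernel k h (y - x) * f y) • (y - x)) =
      ((h ^ 2 / (2 * c)) / (∫ y, radialKernel k h (y - x) * f y)) •
        gradient (fun z => ∫ y, radialKernel (shadowProfile k c) h (z - y) * f y) x := by
  rw [(hasGradientAt_radialKernel_shadowProfile_conv hfi hk0 hkc hkm hki c hh x).gradient,
    smul_smul]
  congr 1
  field_simp

/-- The mean shift with kernel `K_h` equals `h²/(2c)` times the gradient of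
`L_h ∗ f` divided by `K_h ∗ f`, where `L` is the shadow kernel of `K`. -/
theorem mean_shift_eq_shadow_gradient
    {d : ℕ} (hd : 0 < d) (f : Euc d → ℝ)
    (hf0 : ∀ x, 0 ≤ f x) (hfb : ∃ M, ∀ x, |f x| ≤ M)
    (hfi : Integrable f volume) (hfc : Continuous f)
    (k : ℝ → ℝ) (hk0 : ∀ u ∈ Ici (0:ℝ), 0 ≤ k u)
    (hkc : ContinuousOn k (Ici 0)) (hkm : AntitoneOn k (Ici 0))
    (hki : IntegrableOn k (Ici 0) volume)
    (c : ℝ) (hc : 0 < c) (h : ℝ) (hh : 0 < h)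
    (x : Euc d)
    (hpos : 0 < ∫ y, radialKernel k h (y - x) * f y) :
    (∫ y, radialKernel k h (y - x) * f y)⁻¹ •
        (∫ y, (radialKernel k h (y - x) * f y) • (y - x)) =
      ((h ^ 2 / (2 * c)) / (∫ y, radialKernel k h (y - x) * f y)) •
        gradient (fun z => ∫ y, radialKernel (shadowProfile k c) h (z - y) * f y) x :=
  mean_shift_eq_shadow_gradient_general f hfi k hk0 hkc hkm hki c hc h hh x
end

section
/- Let s ∈ (0, sup f) be such that the level set {x : f(x) = s} contains no critical point of f. Then sup_{f̃ ∈ F_η} d_H({x : f(x) ≥ s}, {x : f̃(x) ≥ s}) → 0 as η → 0, where d_H denotes the Hausdorff distance between subsets of ℝ^d; i.e., for every ε > 0 there exists η₀ > 0 such that for all 0 < η ≤ η₀ and all f̃ ∈ F_η, d_H({f ≥ s}, {f̃ ≥ s}) ≤ ε. -/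
/-!
Since `f` vanishes at infinity, `{f ≥ s/2}` is compact, so the absence of critical points on
`{f = s}` upgrades to a uniform bound `‖∇f‖ ≥ c` on a band `|f - s| ≤ a`. The Hessian bound makes
`∇f` Lipschitz, so a step of fixed length `t ≤ ε` along the gradient from any point of the band
raises `f` by a fixed amount `2δ`. Hence every point of `{f ≥ s - δ}` is `ε`-close to
`{f ≥ s + δ}`, and for `‖f̃ - f‖_∞ ≤ δ` both `{f ≥ s}` and `{f̃ ≥ s}` are squeezed between these
two sets.
-/

open Metric Set Filter MeasureTheory Topology
open scoped Topology RealInnerProductSpace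

/-- `ftil` belongs to the perturbation class `F_η` around `f`: it is twice differentiable with
bounded and uniformly continuous zeroth, first and second derivatives, and is uniformly
`η`-close to `f` together with its first and second derivatives. -/
def InPerturbClass {d : ℕ} (f ftil : Euc d → ℝ) (η : ℝ) : Prop :=
  Differentiable ℝ ftil ∧
  Differentiable ℝ (gradient ftil) ∧
  (∃ M, ∀ x, |ftil x| ≤ M) ∧
  (∃ M, ∀ x, ‖gradient ftil x‖ ≤ M) ∧
  (∃ M, ∀ x, ‖hess ftil x‖ ≤ M) ∧
  UniformContinuous ftil ∧
  UniformContinuous (gradient ftil) ∧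
  UniformContinuous (hess ftil) ∧
  (∀ x, |ftil x - f x| ≤ η) ∧
  (∀ x, ‖gradient ftil x - gradient f x‖ ≤ η) ∧
  (∀ x, ‖hess ftil x - hess f x‖ ≤ η)

open scoped NNReal

theorem isCompact_setOf_le_of_tendsto_cocompact {X : Type*} [TopologicalSpace X] {f : X → ℝ}
    (hf : Continuous f) (hlim : Tendsto f (cocompact X) (𝓝 0)) {c : ℝ} (hc : 0 < c) :
    IsCompact {x | c ≤ f x} := by
  obtain ⟨t, ht, hsub⟩ := mem_cocompact.mp (hlim.eventually (eventually_lt_nhds hc))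
  refine ht.of_isClosed_subset (isClosed_le continuous_const hf) fun x (hx : c ≤ f x) => ?_
  by_contra hxt
  exact not_le.2 (hsub hxt : f x < c) hx

/-- Positivity of `max |f - s| g` on the compact set `{f ≥ s/2}` gives a uniform bound there. -/
theorem exists_lower_bound_near_level {X : Type*} [TopologicalSpace X] {f g : X → ℝ}
    (hf : Continuous f) (hg : Continuous g) (hlim : Tendsto f (cocompact X) (𝓝 0))
    {s : ℝ} (hs : 0 < s) (hpos : ∀ x, f x = s → 0 < g x) :
    ∃ a > 0, ∃ c > 0, ∀ x, |f x - s| ≤ a → c ≤ g x := by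
  have hmax_pos : ∀ x ∈ {x | s / 2 ≤ f x}, 0 < max |f x - s| (g x) := by
    intro x _
    rcases eq_or_ne (f x) s with h | h
    · exact lt_max_of_lt_right (hpos x h)
    · exact lt_max_of_lt_left (abs_pos.2 (sub_ne_zero.2 h))
  obtain ⟨c, hc, hcK⟩ :=
    (isCompact_setOf_le_of_tendsto_cocompact hf hlim (half_pos hs)).exists_forall_le'
      (f := fun x => max |f x - s| (g x)) ((hf.sub continuous_const).abs.max hg).continuousOn
      hmax_pos
  refine ⟨min (s / 2) (c / 2), by positivity, c, hc, fun x hx => ?_⟩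
  have hxa := abs_le.1 hx
  have hxK : s / 2 ≤ f x := by linarith [min_le_left (s / 2) (c / 2)]
  rcases le_max_iff.1 (hcK x hxK) with h | h
  · linarith [min_le_right (s / 2) (c / 2)]
  · exact h

section Ascent

variable {E : Type*} [NormedAddCommGroup E] [InnerProductSpace ℝ E] [CompleteSpace E]
  {f : E → ℝ} {K : ℝ≥0}

theorem add_mul_inner_sub_le_apply_add_smul (hf : Differentiable ℝ f)
    (hK : LipschitzWith K (gradient f)) (x : E) {u : E} (hu : ‖u‖ = 1) {t : ℝ} (ht : 0 ≤ t) :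
    f x + t * (⟪gradient f x, u⟫ - K * t) ≤ f (x + t • u) := by
  set φ : ℝ → ℝ := fun τ => f (x + τ • u)
  have hφ : ∀ τ, HasDerivAt φ ⟪gradient f (x + τ • u), u⟫ τ := fun τ => by
    have hline : HasDerivAt (fun τ : ℝ => x + τ • u) u τ := by
      simpa using ((hasDerivAt_id τ).smul_const u).const_add x
    exact (hf _).hasGradientAt.hasFDerivAt.comp_hasDerivAt τ hline
  have hslope : ∀ τ ∈ Icc 0 t, ⟪gradient f x, u⟫ - K * t ≤ ⟪gradient f (x + τ • u), u⟫ := by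
    intro τ hτ
    have hdev : |⟪gradient f (x + τ • u) - gradient f x, u⟫| ≤ K * τ := calc
      _ ≤ ‖gradient f (x + τ • u) - gradient f x‖ := by
        simpa [hu] using abs_real_inner_le_norm (gradient f (x + τ • u) - gradient f x) u
      _ ≤ K * ‖x + τ • u - x‖ := hK.norm_sub_le _ _
      _ = K * τ := by rw [add_sub_cancel_left, norm_smul, hu, Real.norm_of_nonneg hτ.1, mul_one]
    rw [inner_sub_left] at hdev
    nlinarith [abs_le.1 hdev, hτ.2, K.coe_nonneg]
  have hmvt := (convex_Icc 0 t).mul_sub_le_image_sub_of_le_deriv (f := φ)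
    (fun τ _ => (hφ τ).continuousAt.continuousWithinAt)
    (fun τ _ => (hφ τ).differentiableAt.differentiableWithinAt)
    (fun τ hτ => (hφ τ).deriv ▸ hslope τ (interior_subset hτ))
    0 ⟨le_rfl, ht⟩ t ⟨ht, le_rfl⟩ ht
  simp only [φ, zero_smul, add_zero, sub_zero] at hmvt
  linarith

theorem exists_climb_of_lipschitzWith_gradient (hf : Differentiable ℝ f)
    (hK : LipschitzWith K (gradient f)) {s a c : ℝ} (ha : 0 < a) (hc : 0 < c)
    (hband : ∀ x, |f x - s| ≤ a → c ≤ ‖gradient f x‖) {ε : ℝ} (hε : 0 < ε) :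
    ∃ δ > 0, ∀ x, s - δ ≤ f x → ∃ y, dist x y ≤ ε ∧ s + δ ≤ f y := by
  set t := min ε (c / (2 * (K + 1)))
  have ht : 0 < t := lt_min hε (by positivity)
  have hKt : K * t ≤ c / 2 := calc
    (K : ℝ) * t ≤ (K + 1) * (c / (2 * (K + 1))) :=
      mul_le_mul (by linarith) (min_le_right _ _) ht.le (by positivity)
    _ = c / 2 := by field_simp
  refine ⟨min a (c * t / 4), by positivity, fun x hx => ?_⟩
  rcases le_or_gt (s + min a (c * t / 4)) (f x) with hhi | hlo
  · exact ⟨x, by simp [hε.le], hhi⟩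
  have hgrad : c ≤ ‖gradient f x‖ := hband x (abs_le.2
    ⟨by linarith [min_le_left a (c * t / 4)], by linarith [min_le_left a (c * t / 4)]⟩)
  have hgrad0 : gradient f x ≠ 0 := norm_pos_iff.1 (hc.trans_le hgrad)
  set u := ‖gradient f x‖⁻¹ • gradient f x
  have hu : ‖u‖ = 1 := norm_smul_inv_norm hgrad0
  have hinner : ⟪gradient f x, u⟫ = ‖gradient f x‖ := by
    rw [real_inner_smul_right, real_inner_self_eq_norm_sq, sq,
      inv_mul_cancel_left₀ (norm_ne_zero_iff.2 hgrad0)]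
  refine ⟨x + t • u, ?_, ?_⟩
  · rw [dist_self_add_right, norm_smul, hu, Real.norm_of_nonneg ht.le, mul_one]
    exact min_le_left _ _
  · have hstep := add_mul_inner_sub_le_apply_add_smul hf hK x hu ht.le
    rw [hinner] at hstep
    nlinarith [min_le_right a (c * t / 4)]

end Ascent

theorem hausdorffDist_setOf_le_le_of_climb {X : Type*} [PseudoMetricSpace X] {f g : X → ℝ}
    {s δ ε : ℝ} (hε : 0 ≤ ε) (hclimb : ∀ x, s - δ ≤ f x → ∃ y, dist x y ≤ ε ∧ s + δ ≤ f y)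
    (hclose : ∀ x, |g x - f x| ≤ δ) :
    hausdorffDist {x | s ≤ f x} {x | s ≤ g x} ≤ ε := by
  apply hausdorffDist_le_of_infDist hε
  · rintro x (hx : s ≤ f x)
    obtain ⟨y, hxy, hy⟩ := hclimb x (by linarith [abs_le.1 (hclose x)])
    have hy' : s ≤ g y := by linarith [abs_le.1 (hclose y)]
    exact (infDist_le_dist_of_mem (x := x) hy').trans hxy
  · rintro x (hx : s ≤ g x)
    obtain ⟨y, hxy, hy⟩ := hclimb x (by linarith [abs_le.1 (hclose x)])
    have hy' : s ≤ f y := by linarith [abs_le.1 (hclose x)]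
    exact (infDist_le_dist_of_mem (x := x) hy').trans hxy

theorem upper_level_sets_hausdorff_stable_general
    {d : ℕ} (f : Euc d → ℝ) (hf : IsNiceDensity f)
    (s : ℝ) (hs : s ∈ Ioo (0:ℝ) (⨆ x, f x))
    (hnoncrit : ∀ x : Euc d, f x = s → gradient f x ≠ 0) :
    ∀ ε > (0:ℝ), ∃ η₀ > (0:ℝ), ∀ η : ℝ, 0 < η → η ≤ η₀ →
      ∀ ftil : Euc d → ℝ, InPerturbClass f ftil η →
        hausdorffDist {x : Euc d | s ≤ f x} {x : Euc d | s ≤ ftil x} ≤ ε := by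
  intro ε hε
  obtain ⟨-, -, hlim, hdiff, hgdiff, -, -, ⟨M, hM⟩, -⟩ := hf
  obtain ⟨a, ha, c, hc, hband⟩ := exists_lower_bound_near_level hdiff.continuous
    hgdiff.continuous.norm hlim hs.1 fun x hx => norm_pos_iff.2 (hnoncrit x hx)
  have hlip : LipschitzWith M.toNNReal (gradient f) :=
    lipschitzWith_of_nnnorm_fderiv_le hgdiff fun x => by
      rw [← NNReal.coe_le_coe, coe_nnnorm, Real.coe_toNNReal']
      exact (hM x).trans (le_max_left _ _)
  obtain ⟨δ, hδ, hclimb⟩ := exists_climb_of_lipschitzWith_gradient hdiff hlip ha hc hband hε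
  exact ⟨δ, hδ, fun η _ hηδ ftil hftil =>
    hausdorffDist_setOf_le_le_of_climb hε.le hclimb fun x => (hftil.2.2.2.2.2.2.2.2.1 x).trans hηδ⟩

/-- For a noncritical level `s ∈ (0, sup f)`, the Hausdorff distance between
the upper level sets `{f ≥ s}` and `{f̃ ≥ s}` tends to zero uniformly over `f̃ ∈ F_η` as
`η → 0`. -/
theorem upper_level_sets_hausdorff_stable
    {d : ℕ} (hd : 0 < d) (f : Euc d → ℝ) (hf : IsNiceDensity f)
    (s : ℝ) (hs : s ∈ Ioo (0:ℝ) (⨆ x, f x))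
    (hnoncrit : ∀ x : Euc d, f x = s → gradient f x ≠ 0) :
    ∀ ε > (0:ℝ), ∃ η₀ > (0:ℝ), ∀ η : ℝ, 0 < η → η ≤ η₀ →
      ∀ ftil : Euc d → ℝ, InPerturbClass f ftil η →
        hausdorffDist {x : Euc d | s ≤ f x} {x : Euc d | s ≤ ftil x} ≤ ε :=
  upper_level_sets_hausdorff_stable_general f hf s hs hnoncrit
end

section
/- There is a constant C > 0, depending only on κ₁ = sup ‖∇f‖ and κ₂ = sup ‖∇²f‖, with the following property. Let s > 0, let Y ⊆ ℝ^d be a finite set, and set α_s = sup_{x ∈ U_s} inf_{y ∈ Y} ‖x − y‖ where U_s = {f ≥ s}. Let C₂ₛ be a connected component of U_{2s}, and suppose ε > 0 satisfies α_s ≤ ε/2, ε ≤ s/κ₁, and ε is smaller than the distance between the connected component of U_s containing C₂ₛ and the rest of U_s. Then every medoid Max Shift sequence with parameter ε and medoid set Y started at any point of C₂ₛ is eventually constant (converges in finitely many steps) equal to a point y∞ ∈ Y lying in the component of U_s containing C₂ₛ, and ‖∇f(y∞)‖ ≤ C·(α_s/ε + ε). -/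
open Metric Set Filter MeasureTheory Topology
open scoped Topology RealInnerProductSpace

/-- A medoid Max Shift sequence with parameter `ε` and medoid set `Y` started at `x₀`: each
point is a medoid in the open ball of radius `ε` around the previous point maximizing `f`
there, and the sequence becomes constant as soon as the density value stops strictly
increasing. -/
def IsMedoidMaxShiftSeq {d : ℕ} (f : Euc d → ℝ) (ε : ℝ) (Y : Finset (Euc d))
    (x₀ : Euc d) (x : ℕ → Euc d) : Prop :=
  x 0 = x₀ ∧ ∀ k : ℕ,
    x (k+1) ∈ Y ∧ x (k+1) ∈ ball (x k) ε ∧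
    (∀ y ∈ Y, y ∈ ball (x k) ε → f y ≤ f (x (k+1))) ∧
    (f (x (k+1)) = f (x k) → ∀ m, k + 1 ≤ m → x m = x (k+1))


/-- Auxiliary: a differentiable map with globally bounded derivative is Lipschitz. -/
lemma lip_aux {d : ℕ} {E : Type*} [NormedAddCommGroup E] [NormedSpace ℝ E]
    {g : Euc d → E} (hg : Differentiable ℝ g) {M : ℝ}
    (hM : ∀ x, ‖fderiv ℝ g x‖ ≤ M) (a b : Euc d) :
    ‖g b - g a‖ ≤ M * ‖b - a‖ :=
  Convex.norm_image_sub_le_of_norm_hasFDerivWithin_le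
    (fun x _ => (hg x).hasFDerivAt.hasFDerivWithinAt) (fun x _ => hM x)
    convex_univ (mem_univ a) (mem_univ b)

/-- Auxiliary: first-order Taylor bound from a Lipschitz derivative. -/
lemma taylor_aux {d : ℕ} {f : Euc d → ℝ} (hf : Differentiable ℝ f)
    {M : ℝ} (hM0 : 0 ≤ M)
    (hM : ∀ a b, ‖fderiv ℝ f b - fderiv ℝ f a‖ ≤ M * ‖b - a‖)
    (a b : Euc d) :
    |f b - f a - fderiv ℝ f a (b - a)| ≤ M * ‖b - a‖ ^ 2 := by
  have bound : ∀ z ∈ closedBall a ‖b - a‖,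
      ‖fderiv ℝ f z - fderiv ℝ f a‖ ≤ M * ‖b - a‖ := by
    intro z hz
    have hz' : ‖z - a‖ ≤ ‖b - a‖ := by simpa [mem_closedBall, dist_eq_norm] using hz
    exact (hM a z).trans (by nlinarith)
  have key := Convex.norm_image_sub_le_of_norm_hasFDerivWithin_le
    (f := fun z => f z - fderiv ℝ f a z)
    (f' := fun z => fderiv ℝ f z - fderiv ℝ f a)
    (fun z _ => ((hf z).hasFDerivAt.sub (fderiv ℝ f a).hasFDerivAt).hasFDerivWithinAt)
    bound
    (convex_closedBall a ‖b - a‖) (mem_closedBall_self (norm_nonneg _))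
    (by simp [mem_closedBall, dist_eq_norm] : b ∈ closedBall a ‖b - a‖)
  have h2 : f b - fderiv ℝ f a b - (f a - fderiv ℝ f a a)
      = f b - f a - fderiv ℝ f a (b - a) := by
    rw [map_sub]; ring
  rw [Real.norm_eq_abs, h2] at key
  calc |f b - f a - fderiv ℝ f a (b - a)| ≤ M * ‖b - a‖ * ‖b - a‖ := key
    _ = M * ‖b - a‖ ^ 2 := by ring

set_option maxHeartbeats 1000000 in
/-- There is a constant `C > 0` (depending only on `κ₁ = sup ‖∇f‖` and
`κ₂ = sup ‖∇²f‖`) such that, with `α_s` the covering radius of the medoid set `Y` over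
`U_s = {f ≥ s}`, if `α_s ≤ ε/2`, `ε ≤ s/κ₁`, and `ε` is smaller than the separation between
the component of `U_s` containing the starting point and the rest of `U_s`, then every medoid
Max Shift sequence started at a point of `U_{2s}` is eventually constant, ending at a medoid
in that component of `U_s`, at which the gradient has norm at most `C(α_s/ε + ε)`. -/
theorem medoidMaxShift_converges
    {d : ℕ} (hd : 0 < d) (f : Euc d → ℝ) (hf : IsNiceDensity f) :
    ∃ C > (0:ℝ), ∀ s > (0:ℝ), ∀ Y : Finset (Euc d), ∀ ε > (0:ℝ),
      sSup ((fun z => infDist z (Y : Set (Euc d))) '' {z : Euc d | s ≤ f z}) ≤ ε / 2 →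
      ε ≤ s / (⨆ z : Euc d, ‖gradient f z‖) →
      ∀ x₀ : Euc d, 2 * s ≤ f x₀ →
      (∀ y ∈ connectedComponentIn {z : Euc d | s ≤ f z} x₀,
        ∀ w ∈ {z : Euc d | s ≤ f z} \ connectedComponentIn {z : Euc d | s ≤ f z} x₀,
          ε < dist y w) →
      ∀ x : ℕ → Euc d, IsMedoidMaxShiftSeq f ε Y x₀ x →
        ∃ K : ℕ, (∀ m, K ≤ m → x m = x K) ∧ x K ∈ Y ∧
          x K ∈ connectedComponentIn {z : Euc d | s ≤ f z} x₀ ∧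
          ‖gradient f (x K)‖ ≤ C *
            (sSup ((fun z => infDist z (Y : Set (Euc d))) '' {z : Euc d | s ≤ f z}) / ε
              + ε) := by
  obtain ⟨h0, hint, htend, hdf, hdg, hMf, ⟨M₁, hM₁⟩, ⟨M₂, hM₂⟩, hucf, hucg, huch, hmorse⟩ := hf
  set κ : ℝ := ⨆ z : Euc d, ‖gradient f z‖ with hκdef
  have hgradnorm : ∀ x : Euc d, ‖gradient f x‖ = ‖fderiv ℝ f x‖ := by
    intro x; rw [gradient]; exact (InnerProductSpace.toDual ℝ _).symm.norm_map _
  have hbddrange : BddAbove (range fun z : Euc d => ‖gradient f z‖) :=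
    ⟨M₁, by rintro _ ⟨z, rfl⟩; exact hM₁ z⟩
  have hκ_le : ∀ x : Euc d, ‖gradient f x‖ ≤ κ := fun x => le_ciSup hbddrange x
  have hκ0 : 0 ≤ κ := (norm_nonneg _).trans (hκ_le 0)
  have hM₂0 : 0 ≤ M₂ := (norm_nonneg _).trans (hM₂ 0)
  have hlipf : ∀ a b : Euc d, |f b - f a| ≤ κ * ‖b - a‖ := by
    intro a b
    have := lip_aux hdf (fun x => (hgradnorm x) ▸ hκ_le x) a b
    rwa [Real.norm_eq_abs] at this
  have hlipg : ∀ a b : Euc d, ‖gradient f b - gradient f a‖ ≤ M₂ * ‖b - a‖ :=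
    fun a b => lip_aux hdg (fun x => hM₂ x) a b
  have htd : ∀ x : Euc d,
      (InnerProductSpace.toDual ℝ (Euc d)) (gradient f x) = fderiv ℝ f x := by
    intro x; rw [gradient]; exact (InnerProductSpace.toDual ℝ _).apply_symm_apply _
  have hlipF : ∀ a b : Euc d, ‖fderiv ℝ f b - fderiv ℝ f a‖ ≤ M₂ * ‖b - a‖ := by
    intro a b
    rw [← htd a, ← htd b, ← map_sub, (InnerProductSpace.toDual ℝ (Euc d)).norm_map]
    exact hlipg a b
  have htay := taylor_aux hdf hM₂0 hlipF
  refine ⟨4 * κ + M₂ + 1, by positivity, ?_⟩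
  intro s hs Y ε hε hα hεκ x₀ hx₀ hsep x hseq
  set U : Set (Euc d) := {z : Euc d | s ≤ f z} with hUdef
  set α : ℝ := sSup ((fun z => infDist z (Y : Set (Euc d))) '' U) with hαdef
  -- κ * ε ≤ s
  have hκε : κ * ε ≤ s := by
    rcases eq_or_lt_of_le hκ0 with h | h
    · rw [← h, div_zero] at hεκ; linarith
    · rw [le_div_iff₀ h] at hεκ; linarith
  have hα0 : 0 ≤ α :=
    Real.sSup_nonneg (by rintro _ ⟨z, _, rfl⟩; exact infDist_nonneg)
  have hY1 : x 1 ∈ Y := (hseq.2 0).1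
  -- U is contained in a compact set, so the image is bounded above
  have hUbd : ∃ R : ℝ, ∀ z ∈ U, ‖z‖ ≤ R := by
    have hev : ∀ᶠ z in cocompact (Euc d), f z < s := htend.eventually_lt_const hs
    obtain ⟨t, htc, htsub⟩ := mem_cocompact.mp hev
    obtain ⟨R, hR⟩ := htc.isBounded.subset_closedBall 0
    refine ⟨R, fun z hz => ?_⟩
    have hzt : z ∈ t := by
      by_contra h
      have h2 : f z < s := htsub h
      have h3 : s ≤ f z := hz
      linarith
    simpa [mem_closedBall, dist_zero_right] using hR hzt
  have hbdd : BddAbove ((fun z => infDist z (Y : Set (Euc d))) '' U) := by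
    obtain ⟨R, hR⟩ := hUbd
    refine ⟨R + ‖x 1‖, ?_⟩
    rintro _ ⟨z, hz, rfl⟩
    calc infDist z (Y : Set (Euc d)) ≤ dist z (x 1) :=
          infDist_le_dist_of_mem (by exact_mod_cast hY1)
      _ ≤ ‖z‖ + ‖x 1‖ := by
          rw [dist_eq_norm]
          exact (norm_sub_le _ _)
      _ ≤ R + ‖x 1‖ := by linarith [hR z hz]
  have hnear : ∀ z ∈ U, ∃ y ∈ Y, dist z y ≤ α := by
    intro z hz
    obtain ⟨y, hy, he⟩ := (Y.finite_toSet.isCompact).exists_infDist_eq_dist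
      ⟨x 1, by exact_mod_cast hY1⟩ z
    refine ⟨y, by exact_mod_cast hy, ?_⟩
    rw [← he]
    exact le_csSup hbdd ⟨z, hz, rfl⟩
  have hx₀U : x₀ ∈ U := by
    simp only [hUdef, mem_setOf_eq]; linarith
  -- f (x 1) ≥ 3s/2
  have hf1 : 3 / 2 * s ≤ f (x 1) := by
    obtain ⟨y₀, hy₀Y, hy₀d⟩ := hnear x₀ hx₀U
    have hy₀ball : y₀ ∈ ball (x 0) ε := by
      rw [hseq.1, mem_ball, dist_comm]
      linarith
    have h1 := (hseq.2 0).2.2.1 y₀ hy₀Y hy₀ball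
    have h2 := hlipf x₀ y₀
    have h3 : ‖y₀ - x₀‖ ≤ ε / 2 := by
      rw [← dist_eq_norm, dist_comm]; linarith
    have h4 : κ * ‖y₀ - x₀‖ ≤ κ * (ε / 2) := by
      exact mul_le_mul_of_nonneg_left h3 hκ0
    have h5 := abs_le.mp h2
    linarith
  -- the sequence of values is monotone for indices ≥ 1
  have hmono : Monotone fun n => f (x (n + 1)) := by
    refine monotone_nat_of_le_succ fun n => ?_
    exact (hseq.2 (n + 1)).2.2.1 (x (n + 1)) (hseq.2 n).1 (mem_ball_self hε)
  -- the values eventually stabilize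
  have hexists : ∃ k, f (x (k + 2)) = f (x (k + 1)) := by
    by_contra h
    push_neg at h
    have hstrict : ∀ k, f (x (k + 1)) < f (x (k + 2)) := fun k =>
      lt_of_le_of_ne (hmono (Nat.le_succ k)) (Ne.symm (h k))
    have hsm : StrictMono fun n => f (x (n + 1)) := strictMono_nat_of_lt_succ hstrict
    have hinj : Function.Injective fun n : ℕ => x (n + 1) := by
      intro a b hab
      exact hsm.injective (congrArg f hab)
    exact Y.finite_toSet.not_infinite
      (Set.infinite_of_injective_forall_mem hinj fun n => by
        exact_mod_cast (hseq.2 n).1)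
  obtain ⟨k, hk⟩ := hexists
  have hconstk := (hseq.2 (k + 1)).2.2.2 hk
  have hconst : ∀ m, k + 2 ≤ m → x m = x (k + 2) := by
    intro m hm
    rw [hconstk m hm]
  -- membership of every iterate in U
  have hfmem : ∀ n, x n ∈ U := by
    intro n
    match n with
    | 0 => rw [hseq.1]; exact hx₀U
    | (n + 1) =>
      have h1 : f (x 1) ≤ f (x (n + 1)) := hmono (Nat.zero_le n)
      simp only [hUdef, mem_setOf_eq]
      linarith
  -- membership in the connected component
  have hcomp : ∀ n, x n ∈ connectedComponentIn U x₀ := by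
    intro n
    induction n with
    | zero => rw [hseq.1]; exact mem_connectedComponentIn hx₀U
    | succ n ih =>
      by_contra hnot
      have h1 := hsep (x n) ih (x (n + 1)) ⟨hfmem (n + 1), hnot⟩
      have h2 : dist (x (n + 1)) (x n) < ε := mem_ball.mp (hseq.2 n).2.1
      rw [dist_comm] at h2
      linarith
  refine ⟨k + 2, hconst, (hseq.2 (k + 1)).1, hcomp (k + 2), ?_⟩
  -- the gradient bound
  set p : Euc d := x (k + 2) with hpdef
  have hfp : 3 / 2 * s ≤ f p := le_trans hf1 (hmono (Nat.zero_le (k + 1)))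
  have hmaxK : ∀ y ∈ Y, y ∈ ball p ε → f y ≤ f p := by
    intro y hy hyb
    have h1 := (hseq.2 (k + 2)).2.2.1 y hy hyb
    rwa [hconst (k + 2 + 1) (by omega)] at h1
  set g : Euc d := gradient f p with hgdef
  by_cases hg : g = 0
  · rw [hg, norm_zero]
    have h1 : 0 ≤ α / ε + ε := by positivity
    positivity
  · have hgn : 0 < ‖g‖ := norm_pos_iff.mpr hg
    set u : Euc d := (ε / (4 * ‖g‖)) • g with hudef
    have hun : ‖u‖ = ε / 4 := by
      rw [hudef, norm_smul, Real.norm_eq_abs,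
        abs_of_pos (div_pos hε (by positivity))]
      field_simp
    set z : Euc d := p + u with hzdef
    have hzp : z - p = u := by rw [hzdef]; abel
    have hFpu : fderiv ℝ f p u = ε / 4 * ‖g‖ := by
      rw [← htd p, InnerProductSpace.toDual_apply_apply, hudef, real_inner_smul_right,
        real_inner_self_eq_norm_sq]
      field_simp
      ring
    have htayz' := abs_le.mp (htay p z)
    rw [hzp, hun, hFpu] at htayz'
    have hlz := abs_le.mp (hlipf p z)
    have hzpn : ‖z - p‖ = ε / 4 := by rw [hzp, hun]
    rw [hzpn] at hlz
    have hκε4 : κ * (ε / 4) ≤ s / 4 := by nlinarith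
    have hεg : 0 ≤ ε / 4 * ‖g‖ := by positivity
    have hzU : z ∈ U := by
      simp only [hUdef, mem_setOf_eq]
      linarith [hlz.1]
    obtain ⟨y, hyY, hyzd⟩ := hnear z hzU
    have hdzp : dist z p = ε / 4 := by rw [dist_eq_norm, hzpn]
    have hyball : y ∈ ball p ε := by
      rw [mem_ball]
      have h1 : dist y p ≤ dist y z + dist z p := dist_triangle y z p
      have h2 : dist y z ≤ α := by rw [dist_comm]; exact hyzd
      rw [hdzp] at h1
      linarith
    have hfyle : f y ≤ f p := hmaxK y hyY hyball
    have hfyge := abs_le.mp (hlipf z y)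
    have hyz : ‖y - z‖ ≤ α := by rw [← dist_eq_norm, dist_comm]; exact hyzd
    have hky : κ * ‖y - z‖ ≤ κ * α := mul_le_mul_of_nonneg_left hyz hκ0
    -- combine: ε‖g‖/4 ≤ M₂ (ε/4)² + κ α
    have hmain : ε / 4 * ‖g‖ ≤ M₂ * (ε / 4) ^ 2 + κ * α := by
      linarith [htayz'.1, hfyge.1]
    have hre : (4 * κ + M₂ + 1) * (α / ε + ε) = ((4 * κ + M₂ + 1) * (α + ε * ε)) / ε := by
      field_simp
    rw [hre, le_div_iff₀ hε]
    linarith [hmain, mul_nonneg hM₂0 hα0, mul_nonneg hκ0 (mul_nonneg hε.le hε.le),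
      mul_nonneg hM₂0 (mul_nonneg hε.le hε.le), mul_nonneg hε.le hε.le, hα0,
      mul_nonneg hκ0 hα0]
end
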